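/- arXiv:2102.10851 — 2 statements merged into one kernel-verified Lean document; each statement's English description precedes it below -/
import Mathlib

section
/- For all natural numbers s and r, A(s,r,0) equals the r-th derivative of the function t ↦ (cosh t)^s evaluated at t = 0; that is, (A(s,r,0) : ℝ) = iteratedDeriv r (fun t : ℝ => (cosh t)^s) 0. -/
/-- The triangular array `A(s,r,j)`: `A(s,0,j) = δ_{j,0}` and
`A(s,r+1,j) = (s-(j-1))·A(s,r,j-1) + (j+1)·A(s,r,j+1)`. -/
def A (s : ℕ) : ℕ → ℤ → ℤ
  | 0, j => if j = 0 then 1 else 0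
  | r + 1, j => ((s : ℤ) - (j - 1)) * A s r (j - 1) + (j + 1) * A s r (j + 1)

/-!
Write `f_j = cosh ^ (s - j) * sinh ^ j` (an integer power of `cosh`, which never vanishes).
Then `f_j' = (s - j) f_{j+1} + j f_{j-1}`, so differentiating `∑ⱼ A(s,r,j) f_j` and collecting
the coefficient of `f_j` gives exactly the recursion defining `A(s,r+1,j)`. Hence the `r`-th
derivative of `cosh ^ s = f_0` is `∑ⱼ A(s,r,j) f_j`, and at `t = 0` only `f_0(0) = 1` survives.
-/

open Finset Real

lemma A_eq_zero_of_neg (s : ℕ) : ∀ (r : ℕ) {j : ℤ}, j < 0 → A s r j = 0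
  | 0, j, hj => by simp [A, hj.ne]
  | r + 1, j, hj => by
    rcases (show j + 1 < 0 ∨ j + 1 = 0 by omega) with h | h
    · simp [A, A_eq_zero_of_neg s r (show j - 1 < 0 by omega), A_eq_zero_of_neg s r h]
    · simp [A, A_eq_zero_of_neg s r (show j - 1 < 0 by omega), h]

lemma A_eq_zero_of_lt (s : ℕ) : ∀ (r : ℕ) {j : ℤ}, (r : ℤ) < j → A s r j = 0
  | 0, j, hj => by simp [A]; omega
  | r + 1, j, hj => by
    simp [A, A_eq_zero_of_lt s r (show (r : ℤ) < j - 1 by omega),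
      A_eq_zero_of_lt s r (show (r : ℤ) < j + 1 by omega)]

/-- At `j = 0` the term `g (j - 1)` is `g 0` (truncated subtraction), but its coefficient is `0`. -/
lemma sum_range_A_succ_smul {M : Type*} [AddCommGroup M] (s r : ℕ) (g : ℕ → M) :
    ∑ j ∈ range (r + 2), A s (r + 1) j • g j =
      ∑ j ∈ range (r + 1), A s r j • (((s : ℤ) - j) • g (j + 1) + (j : ℤ) • g (j - 1)) := by
  have raising : ∑ j ∈ range (r + 2), (((s : ℤ) - (j - 1)) * A s r (j - 1)) • g j =
      ∑ j ∈ range (r + 1), A s r j • ((s : ℤ) - j) • g (j + 1) := by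
    rw [sum_range_succ', Nat.cast_zero, zero_sub, A_eq_zero_of_neg s r (by norm_num), mul_zero,
      zero_smul, add_zero]
    refine sum_congr rfl fun j _ => ?_
    rw [Nat.cast_succ, add_sub_cancel_right, mul_comm, mul_smul]
  have lowering : ∑ j ∈ range (r + 2), (((j : ℤ) + 1) * A s r (j + 1)) • g j =
      ∑ j ∈ range (r + 1), A s r j • (j : ℤ) • g (j - 1) := by
    rw [sum_range_succ, sum_range_succ, sum_range_succ' _ r,
      A_eq_zero_of_lt s r (show (r : ℤ) < (r + 1 : ℕ) + 1 by omega),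
      A_eq_zero_of_lt s r (show (r : ℤ) < (r : ℕ) + 1 by omega)]
    simp only [mul_zero, zero_smul, add_zero, Nat.cast_zero, smul_zero]
    refine sum_congr rfl fun j _ => ?_
    rw [Nat.cast_succ, Nat.add_sub_cancel, mul_comm, mul_smul]
  simp only [A, add_smul, sum_add_distrib, raising, lowering, smul_add]

lemma hasDerivAt_cosh_zpow_mul_sinh_pow (m : ℤ) (j : ℕ) (t : ℝ) :
    HasDerivAt (fun t => cosh t ^ m * sinh t ^ j)
      (m * (cosh t ^ (m - 1) * sinh t ^ (j + 1)) + j * (cosh t ^ (m + 1) * sinh t ^ (j - 1))) t := by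
  have hcosh := (hasDerivAt_zpow m (cosh t) (.inl (cosh_pos t).ne')).comp t (hasDerivAt_cosh t)
  have hsinh := (hasDerivAt_pow j (sinh t)).comp t (hasDerivAt_sinh t)
  refine (hcosh.mul hsinh).congr_deriv ?_
  simp only [Function.comp_apply, zpow_add_one₀ (cosh_pos t).ne', pow_succ]
  ring

noncomputable def coshSinhTerm (s j : ℕ) (t : ℝ) : ℝ := cosh t ^ ((s : ℤ) - j) * sinh t ^ j

lemma hasDerivAt_coshSinhTerm (s j : ℕ) (t : ℝ) :
    HasDerivAt (coshSinhTerm s j)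
      (((s : ℤ) - j) • coshSinhTerm s (j + 1) t + (j : ℤ) • coshSinhTerm s (j - 1) t) t := by
  refine (hasDerivAt_cosh_zpow_mul_sinh_pow ((s : ℤ) - j) j t).congr_deriv ?_
  rcases j with _ | j
  · simp [coshSinhTerm]
  · simp only [coshSinhTerm, zsmul_eq_mul, Nat.cast_succ, Nat.add_sub_cancel]
    push_cast
    ring_nf

lemma hasDerivAt_sum_A_smul_coshSinhTerm (s r : ℕ) (t : ℝ) :
    HasDerivAt (fun t => ∑ j ∈ range (r + 1), A s r j • coshSinhTerm s j t)
      (∑ j ∈ range (r + 2), A s (r + 1) j • coshSinhTerm s j t) t := by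
  rw [sum_range_A_succ_smul]
  exact HasDerivAt.fun_sum fun j _ => (hasDerivAt_coshSinhTerm s j t).const_smul (A s r j)

lemma iteratedDeriv_cosh_pow (s r : ℕ) :
    iteratedDeriv r (fun t => cosh t ^ s) =
      fun t => ∑ j ∈ range (r + 1), A s r j • coshSinhTerm s j t := by
  induction r with
  | zero => ext t; simp [A, coshSinhTerm]
  | succ r ih =>
    rw [iteratedDeriv_succ, ih]
    ext t
    exact (hasDerivAt_sum_A_smul_coshSinhTerm s r t).deriv

lemma coshSinhTerm_apply_zero (s j : ℕ) : coshSinhTerm s j 0 = if j = 0 then 1 else 0 := by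
  rcases j with _ | j <;> simp [coshSinhTerm]

/-- `A(s,r,0)` equals the `r`-th derivative of `cosh(t)^s` at `t = 0`. -/
theorem stmt5 (s r : ℕ) :
    (A s r 0 : ℝ) = iteratedDeriv r (fun t : ℝ => Real.cosh t ^ s) 0 := by
  simp [iteratedDeriv_cosh_pow, coshSinhTerm_apply_zero]
end

section
/- For all natural numbers r and i with 0 ≤ i ≤ r, the following identity holds in ℚ: Σ_{j≥0} (r)_j · ( Σ_{n≥0} φ(n, i−n, j−2n) ) = S(r, r−i), where S(r, r−i) is the Stirling number of the second kind and all sums are finite since φ vanishes outside 0 ≤ k ≤ j ≤ n. -/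
/-!
Summing the recurrence of `φ` along the diagonal `n ↦ (n, i - n, j - 2n)` shows that
`G(i, j) = ∑ₙ φ(n, i - n, j - 2n)` satisfies
`j·G(i, j) = (j - i)·G(i - 1, j - 1) + G(i - 1, j - 2)`, and `G(i, j) = 0` unless `0 ≤ i ≤ j`.
Combined with `(r + 1)_(j + 1) = (r)_(j + 1) + (j + 1)·(r)_j`, this makes
`L(r, i) = ∑ⱼ (r)_j·G(i, j)` satisfy `L(r + 1, i) = (r + 1 - i)·L(r, i - 1) + L(r, i)`,
which is the recurrence of `S(r, r - i)`; both sides agree at `r = 0`.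
-/

/-- Auxiliary array realizing the triangular field `φ` on natural-number indices. -/
def phiN : ℕ → ℕ → ℕ → ℚ
  | 0, j, k => if j = 0 ∧ k = 0 then 1 else 0
  | n + 1, j, k =>
    if k ≤ j ∧ j ≤ n + 1 then
      ((if _hk : k = 0 then 0 else ((n : ℚ) + 2 - (j : ℚ)) * phiN (n + 1) (j - 1) (k - 1))
        + ((k : ℚ) + 1) * phiN n j (k + 1) + phiN n j k) / (2 * ((n : ℚ) + 1) + (k : ℚ))
    else 0
termination_by n j k => (n, j)

/-- The triangular field `φ(n,j,k)` of rational numbers: `φ(n,j,k) = 0` unless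
`0 ≤ k ≤ j ≤ n`, `φ(0,0,0) = 1`, and for `0 ≤ k ≤ j ≤ n` with `(n,j,k) ≠ (0,0,0)`,
`(2n+k)·φ(n,j,k) = (n-j+1)·φ(n,j-1,k-1) + (k+1)·φ(n-1,j,k+1) + φ(n-1,j,k)`. -/
def phi (n j k : ℤ) : ℚ :=
  if 0 ≤ n ∧ 0 ≤ j ∧ 0 ≤ k then phiN n.toNat j.toNat k.toNat else 0

/-- Stirling numbers of the second kind: `S(0,0) = 1`, `S(m,l) = 0` for `l > m`,
and `S(m+1,l) = l·S(m,l) + S(m,l-1)`. -/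
def S2 : ℕ → ℕ → ℕ
  | 0, 0 => 1
  | 0, _ + 1 => 0
  | _ + 1, 0 => 0
  | m + 1, l + 1 => (l + 1) * S2 m (l + 1) + S2 m l

lemma phiN_eq_zero {n j k : ℕ} (h : ¬(k ≤ j ∧ j ≤ n)) : phiN n j k = 0 := by
  cases n with
  | zero => rw [phiN, if_neg (by omega)]
  | succ n => rw [phiN, if_neg h]

lemma phiN_succ_rec {n j k : ℕ} (hkj : k ≤ j) (hjn : j ≤ n + 1) :
    (2 * ((n : ℚ) + 1) + k) * phiN (n + 1) j k
      = (if k = 0 then 0 else ((n : ℚ) + 2 - j) * phiN (n + 1) (j - 1) (k - 1))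
        + ((k : ℚ) + 1) * phiN n j (k + 1) + phiN n j k := by
  rw [phiN, if_pos ⟨hkj, hjn⟩, mul_div_cancel₀ _ (by positivity), dite_eq_ite]

lemma phi_natCast (n j k : ℕ) : phi n j k = phiN n j k := by
  simp [phi]

lemma phi_eq_zero {n j k : ℤ} (h : ¬(0 ≤ k ∧ k ≤ j ∧ j ≤ n)) : phi n j k = 0 := by
  unfold phi
  split_ifs
  · exact phiN_eq_zero (by omega)
  · rfl

/-- Valid on all of `ℤ³`: outside the triangle each right-hand term vanishes or has a
vanishing coefficient. -/
lemma phi_rec (n j k : ℤ) :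
    (2 * n + k) * phi n j k
      = (n - j + 1) * phi n (j - 1) (k - 1) + (k + 1) * phi (n - 1) j (k + 1)
        + phi (n - 1) j k := by
  by_cases hmem : 0 ≤ k ∧ k ≤ j ∧ j ≤ n
  · obtain ⟨K, rfl⟩ : ∃ K : ℕ, k = K := ⟨k.toNat, by omega⟩
    obtain ⟨J, rfl⟩ : ∃ J : ℕ, j = J := ⟨j.toNat, by omega⟩
    rcases (show n = 0 ∨ 0 < n by omega) with rfl | hn
    · obtain rfl : J = 0 := by omega
      obtain rfl : K = 0 := by omega
      simp [phi_eq_zero]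
    obtain ⟨N, rfl⟩ : ∃ N : ℕ, n = N + 1 := ⟨(n - 1).toNat, by omega⟩
    have hrec := phiN_succ_rec (n := N) (j := J) (k := K) (by omega) (by omega)
    have e : ∀ m : ℕ, ((m + 1 : ℕ) : ℤ) - 1 = m := by intro m; push_cast; ring
    rcases K with _ | K
    · rw [phi_eq_zero (n := (N : ℤ) + 1) (j := J - 1) (k := ((0 : ℕ) : ℤ) - 1) (by omega)]
      simp only [← Nat.cast_add_one, e, phi_natCast] at hrec ⊢
      push_cast at hrec ⊢
      linear_combination hrec
    · obtain ⟨J, rfl⟩ : ∃ J' : ℕ, J = J' + 1 := ⟨J - 1, by omega⟩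
      simp only [← Nat.cast_add_one, e, phi_natCast] at hrec ⊢
      push_cast at hrec ⊢
      linear_combination hrec
  · have h₁ : (n - j + 1) * phi n (j - 1) (k - 1) = 0 := by
      rcases eq_or_ne j (n + 1) with rfl | hj
      · simp
      · rw [phi_eq_zero (by omega), mul_zero]
    have h₂ : (k + 1) * phi (n - 1) j (k + 1) = 0 := by
      rcases eq_or_ne k (-1) with rfl | hk
      · simp
      · rw [phi_eq_zero (by omega), mul_zero]
    rw [h₁, h₂, phi_eq_zero hmem, phi_eq_zero (by omega)]
    ring

noncomputable def phiDiagSum (i j : ℤ) : ℚ :=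
  ∑ᶠ n : ℕ, phi n (i - n) (j - 2 * n)

lemma phiDiagSum_eq_sum_range {i : ℤ} (j : ℤ) {M : ℕ} (hM : i < M) :
    phiDiagSum i j = ∑ n ∈ Finset.range M, phi n (i - n) (j - 2 * n) := by
  refine finsum_eq_sum_of_support_subset _ fun n hn => ?_
  by_contra hnM
  exact hn (phi_eq_zero (by simp at hnM; omega))

lemma phiDiagSum_eq_zero {i j : ℤ} (h : ¬(0 ≤ i ∧ i ≤ j)) : phiDiagSum i j = 0 := by
  rw [phiDiagSum_eq_sum_range j (M := i.toNat + 1) (by omega)]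
  exact Finset.sum_eq_zero fun n _ => phi_eq_zero (by omega)

lemma phiDiagSum_zero_zero : phiDiagSum 0 0 = 1 := by
  rw [phiDiagSum_eq_sum_range 0 (M := 1) (by omega), Finset.sum_range_one]
  simp [phi, phiN]

lemma phiDiagSum_rec (i j : ℤ) :
    j * phiDiagSum i j = (j - i) * phiDiagSum (i - 1) (j - 1) + phiDiagSum (i - 1) (j - 2) := by
  obtain ⟨M, hM⟩ : ∃ M : ℕ, i - 1 < M := ⟨i.toNat, by omega⟩
  rw [phiDiagSum_eq_sum_range j (M := M + 1) (by omega), phiDiagSum_eq_sum_range _ hM,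
    phiDiagSum_eq_sum_range _ hM, Finset.mul_sum, Finset.mul_sum, ← Finset.sum_add_distrib]
  have hdiag (n : ℕ) : j * phi n (i - n) (j - 2 * n)
      = (2 * n - i + 1) * phi n (i - n - 1) (j - 2 * n - 1)
        + ((j - 2 * n + 1) * phi (n - 1) (i - n) (j - 2 * n + 1)
          + phi (n - 1) (i - n) (j - 2 * n)) := by
    have h := phi_rec n (i - n) (j - 2 * n)
    push_cast at h
    linear_combination h
  -- The last two terms of `hdiag` are the `n - 1` terms of the diagonals
  -- of `(i - 1, j - 1)` and `(i - 1, j - 2)`.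
  rw [Finset.sum_congr rfl fun n _ => hdiag n, Finset.sum_add_distrib, Finset.sum_range_succ,
    Finset.sum_range_succ' (fun n : ℕ => _ + _)]
  simp (disch := omega) only [phi_eq_zero, mul_zero, add_zero]
  rw [← Finset.sum_add_distrib]
  refine Finset.sum_congr rfl fun n _ => ?_
  push_cast
  ring_nf

lemma Nat.cast_descFactorial_succ {R : Type*} [Ring R] (r j : ℕ) :
    (r.descFactorial (j + 1) : R) = (r - j) * r.descFactorial j := by
  rcases le_or_gt j r with h | h
  · rw [Nat.descFactorial_succ, Nat.cast_mul, Nat.cast_sub h]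
  · simp [Nat.descFactorial_of_lt, h]

lemma sum_range_descFactorial_mul_sub_one (r : ℕ) {f : ℤ → ℚ} (hf : f (-1) = 0) :
    ∑ j ∈ Finset.range (r + 1), (r.descFactorial j : ℚ) * f (j - 1)
      = ∑ j ∈ Finset.range (r + 1), ((r : ℚ) - j) * r.descFactorial j * f j := by
  rw [Finset.sum_range_succ', Finset.sum_range_succ]
  simp only [Nat.cast_descFactorial_succ, Nat.cast_add_one, add_sub_cancel_right, Nat.cast_zero,
    zero_sub, hf, mul_zero, add_zero, sub_self, zero_mul, mul_assoc]

noncomputable def phiFactorialMoment (r : ℕ) (i : ℤ) : ℚ :=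
  ∑ᶠ j : ℕ, (r.descFactorial j : ℚ) * phiDiagSum i j

lemma phiFactorialMoment_eq_sum_range {r N : ℕ} (i : ℤ) (hN : r < N) :
    phiFactorialMoment r i
      = ∑ j ∈ Finset.range N, (r.descFactorial j : ℚ) * phiDiagSum i j := by
  refine finsum_eq_sum_of_support_subset _ fun j hj => ?_
  by_contra hjN
  exact hj (by simp [Nat.descFactorial_of_lt (show r < j by simp at hjN; omega)])

lemma phiFactorialMoment_succ (r : ℕ) (i : ℤ) :
    phiFactorialMoment (r + 1) i
      = (r + 1 - i) * phiFactorialMoment r (i - 1) + phiFactorialMoment r i := by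
  have hterm (j : ℕ) : ((r + 1).descFactorial (j + 1) : ℚ) * phiDiagSum i (j + 1)
      = r.descFactorial (j + 1) * phiDiagSum i (j + 1)
        + r.descFactorial j
          * ((j + 1 - i) * phiDiagSum (i - 1) j + phiDiagSum (i - 1) (j - 1)) := by
    have hrec := phiDiagSum_rec i (j + 1)
    rw [add_sub_cancel_right, show (j : ℤ) + 1 - 2 = j - 1 by ring] at hrec
    rw [Nat.succ_descFactorial_succ, Nat.cast_mul, Nat.cast_descFactorial_succ]
    push_cast at hrec ⊢
    linear_combination (r.descFactorial j : ℚ) * hrec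
  have hshift := sum_range_descFactorial_mul_sub_one r
    (f := phiDiagSum (i - 1)) (phiDiagSum_eq_zero (by omega))
  rw [phiFactorialMoment_eq_sum_range i (N := r + 2) (by omega),
    phiFactorialMoment_eq_sum_range (i - 1) (N := r + 1) (by omega),
    phiFactorialMoment_eq_sum_range i (N := r + 2) (by omega),
    Finset.sum_range_succ', Finset.sum_range_succ' _ (r + 1)]
  simp only [Nat.cast_add_one, hterm, Finset.sum_add_distrib, mul_add, ← mul_assoc,
    Finset.mul_sum, hshift]
  rw [← Finset.sum_add_distrib]
  have hcoeff (j : ℕ) : (r.descFactorial j : ℚ) * (j + 1 - i) * phiDiagSum (i - 1) j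
      + (r - j) * r.descFactorial j * phiDiagSum (i - 1) j
      = (r + 1 - i) * r.descFactorial j * phiDiagSum (i - 1) j := by ring
  simp only [hcoeff, Nat.descFactorial_zero, Nat.cast_one]
  ring

lemma phiFactorialMoment_eq_zero {r : ℕ} {i : ℤ} (h : ¬(0 ≤ i ∧ i ≤ r)) :
    phiFactorialMoment r i = 0 := by
  rw [phiFactorialMoment_eq_sum_range i (Nat.lt_succ_self r)]
  refine Finset.sum_eq_zero fun j hj => ?_
  rw [phiDiagSum_eq_zero (by simp at hj; omega), mul_zero]

lemma S2_succ_succ (m l : ℕ) : S2 (m + 1) (l + 1) = (l + 1) * S2 m (l + 1) + S2 m l := rfl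

lemma S2_eq_zero_of_lt {m l : ℕ} (h : m < l) : S2 m l = 0 := by
  induction m generalizing l with
  | zero => obtain ⟨l, rfl⟩ := Nat.exists_eq_succ_of_ne_zero (by omega : l ≠ 0); rfl
  | succ m ih =>
    obtain ⟨l, rfl⟩ := Nat.exists_eq_succ_of_ne_zero (by omega : l ≠ 0)
    rw [S2_succ_succ, ih (by omega), ih (by omega), mul_zero]

lemma S2_self (m : ℕ) : S2 m m = 1 := by
  induction m with
  | zero => rfl
  | succ m ih => rw [S2_succ_succ, S2_eq_zero_of_lt (by omega), ih, mul_zero, zero_add]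

lemma phiFactorialMoment_eq_S2 {r i : ℕ} (hi : i ≤ r) :
    phiFactorialMoment r i = S2 r (r - i) := by
  induction r generalizing i with
  | zero =>
    obtain rfl : i = 0 := by omega
    rw [phiFactorialMoment_eq_sum_range _ (N := 1) (by omega), Finset.sum_range_one]
    simp [phiDiagSum_zero_zero, S2]
  | succ r ih =>
    rw [phiFactorialMoment_succ]
    rcases i with _ | i
    · have h₀ : phiFactorialMoment r 0 = 1 := by simpa [S2_self] using ih (Nat.zero_le r)
      rw [phiFactorialMoment_eq_zero (i := (0 : ℕ) - 1) (by omega), Nat.cast_zero, h₀,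
        Nat.sub_zero, S2_self]
      ring
    rcases (show i = r ∨ i < r by omega) with rfl | hir
    · rw [phiFactorialMoment_eq_zero (i := (i + 1 : ℕ)) (by omega), Nat.sub_self, S2]
      push_cast
      ring
    obtain ⟨l, rfl⟩ : ∃ l : ℕ, r = i + l + 1 := ⟨r - i - 1, by omega⟩
    rw [ih (i := i + 1) hir, show ((i + 1 : ℕ) : ℤ) - 1 = i by push_cast; ring, ih hir.le,
      show i + l + 1 + 1 - (i + 1) = l + 1 by omega, show i + l + 1 - (i + 1) = l by omega,
      show i + l + 1 - i = l + 1 by omega, S2_succ_succ (i + l + 1) l]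
    push_cast
    ring

/-- `∑_{j≥0} (r)_j · (∑_{n≥0} φ(n, i-n, j-2n)) = S(r, r-i)` for `0 ≤ i ≤ r`, where `S` is the
Stirling number of the second kind. The sums are `finsum`s with finite support. -/
theorem stmt10 (r i : ℕ) (hi : i ≤ r) :
    ∑ᶠ j : ℕ, (r.descFactorial j : ℚ)
        * ∑ᶠ n : ℕ, phi (n : ℤ) ((i : ℤ) - (n : ℤ)) ((j : ℤ) - 2 * (n : ℤ))
      = (S2 r (r - i) : ℚ) :=
  phiFactorialMoment_eq_S2 hi
end
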